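/- Let Y be a locally finite directed graph and let a locally profinite group G act properly on Y. Under the isomorphism between H(Y,ℂ) and the algebraic dual of H_c^1(Y,ℂ) given by f ↦ (ω + dC_c^0(Y,ℂ) ↦ ⟨f, ω⟩), a harmonic form f ∈ H(Y,ℂ) corresponds to a smooth linear form (one with open stabilizer under the dual G-action) if and only if f has open stabilizer in G; consequently this isomorphism restricts to a G-equivariant isomorphism between the space H_∞(Y,ℂ) of smooth harmonic forms and the contragredient of H_c^1(Y,ℂ). -/

import Mathlib

open Function

/-- A directed graph: vertices, edges, head and tail maps. -/
structure DiGraph where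
  V : Type
  E : Type
  head : E → V
  tail : E → V

namespace DiGraph

/-- A directed graph is locally finite if every vertex belongs to finitely many edges. -/
def LocallyFinite (Y : DiGraph) : Prop :=
  ∀ s : Y.V, {a : Y.E | Y.head a = s ∨ Y.tail a = s}.Finite

/-- The coboundary `df` of a `0`-cochain `f`: `df(a) = f(a⁺) - f(a⁻)`. -/
def cobound (Y : DiGraph) (f : Y.V → ℂ) : Y.E → ℂ :=
  fun a => f (Y.head a) - f (Y.tail a)

/-- The map `d* : C¹(Y,ℂ) → C⁰(Y,ℂ)`,
`d*f(s) = Σ_{a : a⁺ = s} f(a) - Σ_{a : a⁻ = s} f(a)`. -/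
noncomputable def dstar (Y : DiGraph) (f : Y.E → ℂ) : Y.V → ℂ :=
  fun s => (∑ᶠ a ∈ {a : Y.E | Y.head a = s}, f a) - ∑ᶠ a ∈ {a : Y.E | Y.tail a = s}, f a

/-- The pairing `⟨f, g⟩ = Σ_x f(x) g(x)`. -/
noncomputable def pairing {α : Type} (f g : α → ℂ) : ℂ := ∑ᶠ x, f x * g x

/-- Finitely supported complex valued functions on `α`, as a subspace of all functions. -/
noncomputable def CcSub (α : Type) : Submodule ℂ (α → ℂ) where
  carrier := {f | (support f).Finite}
  add_mem' := fun hf hg => Set.Finite.subset (hf.union hg) (support_add _ _)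
  zero_mem' := by simp
  smul_mem' := fun c f hf => Set.Finite.subset hf (support_const_smul_subset c f)

/-- The coboundary, as a linear map on finitely supported cochains (this uses
local finiteness of the graph). -/
noncomputable def dcc (Y : DiGraph) (hY : Y.LocallyFinite) :
    CcSub Y.V →ₗ[ℂ] CcSub Y.E where
  toFun f := ⟨Y.cobound f.1, by
    have hsub : support (Y.cobound f.1) ⊆
        ⋃ s ∈ support f.1, {a : Y.E | Y.head a = s ∨ Y.tail a = s} := by
      intro a ha
      by_cases h : f.1 (Y.head a) = 0
      · have h' : f.1 (Y.tail a) ≠ 0 := by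
          intro h''
          exact ha (by simp [cobound, h, h''])
        exact Set.mem_biUnion h' (Or.inr rfl)
      · exact Set.mem_biUnion h (Or.inl rfl)
    exact Set.Finite.subset (Set.Finite.biUnion f.2 (fun s _ => hY s)) hsub⟩
  map_add' f g := by
    apply Subtype.ext
    funext a
    simp [cobound]
    ring
  map_smul' c f := by
    apply Subtype.ext
    funext a
    simp [cobound]
    ring

/-- The first cohomology space with compact support of the graph, defined as
finitely supported 1-cochains modulo coboundaries of finitely supported 0-cochains. -/
noncomputable abbrev Hc1 (Y : DiGraph) (hY : Y.LocallyFinite) :=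
  ↥(CcSub Y.E) ⧸ LinearMap.range (Y.dcc hY)

/-- The space of harmonic forms `ker d*`. -/
noncomputable def HarmSub (Y : DiGraph) (hY : Y.LocallyFinite) : Submodule ℂ (Y.E → ℂ) where
  carrier := {f | ∀ s, Y.dstar f s = 0}
  zero_mem' := by
    intro s
    simp [dstar]
  add_mem' := by
    intro f g hf hg s
    have h1 : {a : Y.E | Y.head a = s}.Finite := (hY s).subset (fun a ha => Or.inl ha)
    have h2 : {a : Y.E | Y.tail a = s}.Finite := (hY s).subset (fun a ha => Or.inr ha)
    have hf' := hf s
    have hg' := hg s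
    simp only [dstar, Pi.add_apply] at hf' hg' ⊢
    rw [finsum_mem_add_distrib h1, finsum_mem_add_distrib h2]
    linear_combination hf' + hg'
  smul_mem' := by
    intro c f hf s
    have h1 : {a : Y.E | Y.head a = s}.Finite := (hY s).subset (fun a ha => Or.inl ha)
    have h2 : {a : Y.E | Y.tail a = s}.Finite := (hY s).subset (fun a ha => Or.inr ha)
    have hf' := hf s
    simp only [dstar, Pi.smul_apply, smul_eq_mul] at hf' ⊢
    rw [finsum_mem_eq_finite_toFinset_sum _ h1, finsum_mem_eq_finite_toFinset_sum _ h2]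
      at hf' ⊢
    rw [← Finset.mul_sum, ← Finset.mul_sum]
    linear_combination c * hf'

/-- The natural action of a group element `g` on finitely supported `1`-cochains,
`(g • ω)(a) = ω(g⁻¹ • a)`, for a group acting on the edges of the graph. -/
noncomputable def ccAct {Y : DiGraph} {G : Type} [Group G] (actE : G →* Equiv.Perm Y.E)
    (g : G) (ω : ↥(CcSub Y.E)) : ↥(CcSub Y.E) :=
  ⟨fun a => ω.1 (actE g⁻¹ a), by
    show (support (fun a => ω.1 (actE g⁻¹ a))).Finite
    have h : support (fun a => ω.1 (actE g⁻¹ a)) = (actE g⁻¹) ⁻¹' support ω.1 :=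
      Function.support_comp_eq_preimage (ω.1) (actE g⁻¹)
    rw [h]
    exact ω.2.preimage (Equiv.injective _).injOn⟩

/-!
The unit vectors `δ_a` form a basis of `C_c¹(Y,ℂ)`, so pairing identifies `C¹(Y,ℂ)` with the
algebraic dual of `C_c¹(Y,ℂ)`. Since `⟨f, dδ_s⟩ = d*f(s)`, a form `f` kills `dC_c⁰(Y,ℂ)` exactly
when it is harmonic, so harmonic forms are the annihilator of `dC_c⁰(Y,ℂ)`, i.e. the dual of
`H_c¹(Y,ℂ)`. The pairing is invariant under the diagonal `G`-action, hence `f` and the linear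
form it defines have the same stabilizer.
-/

section FinitelySupported

variable {α : Type}

noncomputable def ccEquivFinsupp (α : Type) : CcSub α ≃ₗ[ℂ] (α →₀ ℂ) where
  toFun ω := Finsupp.ofSupportFinite ω.1 ω.2
  invFun g := ⟨g, g.hasFiniteSupport⟩
  map_add' _ _ := Finsupp.ext fun _ => rfl
  map_smul' _ _ := Finsupp.ext fun _ => rfl
  left_inv _ := rfl
  right_inv _ := Finsupp.ext fun _ => rfl

noncomputable def ccBasis (α : Type) : Module.Basis α ℂ (CcSub α) :=
  Finsupp.basisSingleOne.map (ccEquivFinsupp α).symm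

lemma coe_ccBasis (a : α) : (ccBasis α a : α → ℂ) = Finsupp.single a 1 := rfl

lemma pairing_ccBasis (f : α → ℂ) (a : α) : pairing f (ccBasis α a) = f a := by
  rw [pairing, finsum_eq_single _ a fun x hx => by simp [coe_ccBasis, hx]]
  simp [coe_ccBasis]

lemma constr_ccBasis_apply (f : α → ℂ) (ω : CcSub α) :
    (ccBasis α).constr ℂ f ω = pairing f ω := by
  have repr_apply (a : α) : (ccBasis α).repr ω a = ω.1 a := rfl
  rw [Module.Basis.constr_apply, pairing, Finsupp.sum,
    finsum_eq_sum_of_support_subset (s := ((ccBasis α).repr ω).support)]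
  · simp only [repr_apply, smul_eq_mul, mul_comm]
  · intro x hx
    simpa [repr_apply] using right_ne_zero_of_mul hx

lemma pairing_comp_perm (f ω : α → ℂ) (e : Equiv.Perm α) :
    pairing f (ω ∘ e) = pairing (f ∘ e.symm) ω := by
  rw [pairing, ← finsum_comp_equiv e.symm]
  simp [pairing]

lemma pairing_left_inj {f f' : α → ℂ} : (∀ ω : CcSub α, pairing f ω = pairing f' ω) ↔ f = f' :=
  ⟨fun h => funext fun a => by rw [← pairing_ccBasis f, h, pairing_ccBasis], by rintro rfl _; rfl⟩

end FinitelySupported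

section Harmonic

variable (Y : DiGraph) (hY : Y.LocallyFinite)

lemma pairing_dcc_ccBasis (f : Y.E → ℂ) (s : Y.V) :
    pairing f (Y.dcc hY (ccBasis Y.V s)) = Y.dstar f s := by
  classical
  have hfin (p : Y.E → Prop) (hp : ∀ a, p a → Y.head a = s ∨ Y.tail a = s) :
      (support ({a | p a}.indicator f)).Finite :=
    (hY s).subset fun a ha => hp a (Set.mem_of_indicator_ne_zero ha)
  rw [dstar, finsum_mem_def, finsum_mem_def,
    ← finsum_sub_distrib (hfin _ fun _ => Or.inl) (hfin _ fun _ => Or.inr), pairing]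
  refine finsum_congr fun a => ?_
  simp only [dcc, cobound, LinearMap.coe_mk, AddHom.coe_mk, coe_ccBasis, Finsupp.single_apply,
    Set.indicator_apply, Set.mem_ofPred_eq, eq_comm]
  split_ifs <;> ring

lemma mem_harmSub_iff (f : Y.E → ℂ) :
    f ∈ Y.HarmSub hY ↔
      (ccBasis Y.E).constr ℂ f ∈ (LinearMap.range (Y.dcc hY)).dualAnnihilator := by
  rw [← LinearMap.ker_dualMap_eq_dualAnnihilator_range, LinearMap.mem_ker,
    LinearMap.dualMap_apply']
  refine ⟨fun hf => (ccBasis Y.V).ext fun s => ?_, fun h s => ?_⟩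
  · simp [constr_ccBasis_apply, pairing_dcc_ccBasis, hf s]
  · simpa [constr_ccBasis_apply, pairing_dcc_ccBasis] using LinearMap.congr_fun h (ccBasis Y.V s)

noncomputable def harmonicDualEquiv : Y.HarmSub hY ≃ₗ[ℂ] Module.Dual ℂ (Y.Hc1 hY) :=
  (((ccBasis Y.E).constr ℂ).ofSubmodules _ _ (by
    ext φ
    rw [Submodule.map_equiv_eq_comap_symm, Submodule.mem_comap, mem_harmSub_iff,
      LinearEquiv.coe_coe, LinearEquiv.apply_symm_apply])).trans
    (Submodule.dualQuotEquivDualAnnihilator _).symm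

lemma harmonicDualEquiv_mk (f : Y.HarmSub hY) (ω : CcSub Y.E) :
    Y.harmonicDualEquiv hY f (Submodule.Quotient.mk ω) = pairing (f : Y.E → ℂ) ω := by
  rw [harmonicDualEquiv, LinearEquiv.trans_apply,
    Submodule.dualQuotEquivDualAnnihilator_symm_apply_mk]
  change ((((ccBasis Y.E).constr ℂ).ofSubmodules _ _ _ f : Module.Dual ℂ (CcSub Y.E))) ω = _
  rw [LinearEquiv.ofSubmodules_apply, constr_ccBasis_apply]

end Harmonic

lemma pairing_ccAct_inv {Y : DiGraph} {G : Type} [Group G] (actE : G →* Equiv.Perm Y.E) (g : G)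
    (f : Y.E → ℂ) (ω : CcSub Y.E) :
    pairing f (ccAct actE g⁻¹ ω) = pairing (fun a => f (actE g⁻¹ a)) ω := by
  have : (ccAct actE g⁻¹ ω : Y.E → ℂ) = ω ∘ actE g := by
    funext a
    simp [ccAct]
  rw [this, pairing_comp_perm, map_inv, Equiv.Perm.inv_def]
  rfl

theorem harmonic_smooth_iff_dual_smooth_general (Y : DiGraph) (hY : Y.LocallyFinite)
    (G : Type) [Group G] [TopologicalSpace G]
    (actE : G →* Equiv.Perm Y.E) :
    ∃ Φ : ↥(Y.HarmSub hY) →ₗ[ℂ] Module.Dual ℂ (Y.Hc1 hY),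
      (∀ (f : ↥(Y.HarmSub hY)) (ω : ↥(DiGraph.CcSub Y.E)),
        Φ f (Submodule.Quotient.mk ω) = DiGraph.pairing (f : Y.E → ℂ) (ω : Y.E → ℂ)) ∧
      Function.Bijective Φ ∧
      -- `Φ` is `G`-equivariant: `Φ (g·f) = g·(Φ f)` for the dual action
      (∀ (g : G) (f : ↥(Y.HarmSub hY)) (f' : ↥(Y.HarmSub hY)),
        (∀ a : Y.E, (f' : Y.E → ℂ) a = (f : Y.E → ℂ) (actE g⁻¹ a)) →
          ∀ ω : ↥(DiGraph.CcSub Y.E),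
            Φ f' (Submodule.Quotient.mk ω)
              = Φ f (Submodule.Quotient.mk (ccAct actE g⁻¹ ω))) ∧
      -- `f` is smooth iff the corresponding linear form is smooth
      (∀ f : ↥(Y.HarmSub hY),
        IsOpen {g : G | ∀ a : Y.E, (f : Y.E → ℂ) (actE g⁻¹ a) = (f : Y.E → ℂ) a} ↔
        IsOpen {g : G | ∀ ω : ↥(DiGraph.CcSub Y.E),
          Φ f (Submodule.Quotient.mk (ccAct actE g⁻¹ ω))
            = Φ f (Submodule.Quotient.mk ω)}) := by
  refine ⟨Y.harmonicDualEquiv hY, Y.harmonicDualEquiv_mk hY, (Y.harmonicDualEquiv hY).bijective,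
    fun g f f' hf' ω => ?_, fun f => ?_⟩ <;>
  simp only [LinearEquiv.coe_coe, harmonicDualEquiv_mk, pairing_ccAct_inv]
  · rw [funext hf']
  · simp only [pairing_left_inj, funext_iff]

/-- Let `Y` be a locally finite directed graph and let a locally
profinite group `G` act properly on `Y` (preserving heads and tails of edges).
Under the isomorphism `Φ` between `H(Y,ℂ)` and the algebraic dual of `H_c¹(Y,ℂ)`
given by `f ↦ (ω + dC_c⁰ ↦ ⟨f, ω⟩)`, a harmonic form `f` corresponds to a smooth
linear form (one whose stabilizer under the dual `G`-action, `(g·λ)(w) = λ(g⁻¹·w)`,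
is open) if and only if `f` has open stabilizer in `G` (under the action
`(g·f)(a) = f(g⁻¹·a)`); consequently `Φ` restricts to a `G`-equivariant isomorphism
between the space of smooth harmonic forms and the contragredient of `H_c¹(Y,ℂ)`. -/
theorem harmonic_smooth_iff_dual_smooth (Y : DiGraph) (hY : Y.LocallyFinite)
    (G : Type) [Group G] [TopologicalSpace G] [IsTopologicalGroup G]
    [LocallyCompactSpace G] [T2Space G] [TotallyDisconnectedSpace G]
    (actV : G →* Equiv.Perm Y.V) (actE : G →* Equiv.Perm Y.E)
    (hhead : ∀ (g : G) (a : Y.E), Y.head (actE g a) = actV g (Y.head a))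
    (htail : ∀ (g : G) (a : Y.E), Y.tail (actE g a) = actV g (Y.tail a))
    (hproper : ∀ s : Y.V,
      IsOpen {g : G | actV g s = s} ∧ IsCompact {g : G | actV g s = s}) :
    ∃ Φ : ↥(Y.HarmSub hY) →ₗ[ℂ] Module.Dual ℂ (Y.Hc1 hY),
      (∀ (f : ↥(Y.HarmSub hY)) (ω : ↥(DiGraph.CcSub Y.E)),
        Φ f (Submodule.Quotient.mk ω) = DiGraph.pairing (f : Y.E → ℂ) (ω : Y.E → ℂ)) ∧
      Function.Bijective Φ ∧
      -- `Φ` is `G`-equivariant: `Φ (g·f) = g·(Φ f)` for the dual action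
      (∀ (g : G) (f : ↥(Y.HarmSub hY)) (f' : ↥(Y.HarmSub hY)),
        (∀ a : Y.E, (f' : Y.E → ℂ) a = (f : Y.E → ℂ) (actE g⁻¹ a)) →
          ∀ ω : ↥(DiGraph.CcSub Y.E),
            Φ f' (Submodule.Quotient.mk ω)
              = Φ f (Submodule.Quotient.mk (ccAct actE g⁻¹ ω))) ∧
      -- `f` is smooth iff the corresponding linear form is smooth
      (∀ f : ↥(Y.HarmSub hY),
        IsOpen {g : G | ∀ a : Y.E, (f : Y.E → ℂ) (actE g⁻¹ a) = (f : Y.E → ℂ) a} ↔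
        IsOpen {g : G | ∀ ω : ↥(DiGraph.CcSub Y.E),
          Φ f (Submodule.Quotient.mk (ccAct actE g⁻¹ ω))
            = Φ f (Submodule.Quotient.mk ω)}) :=
  harmonic_smooth_iff_dual_smooth_general Y hY G actE

end DiGraph
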